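/- arXiv:1912.08892 — 6 statements merged into one kernel-verified Lean document; each statement's English description precedes it below -/
import Mathlib

section
/- Let Υ and Ω be two row-strict composition tableaux of the same shape β (a composition of m ≤ n, content [m̄, n] with m̄ = n−m+1), and let j_Υ, j_Ω denote the indices of the rows containing the minimal entry m̄ in Υ and Ω respectively. Then exactly one of the following holds: (1) (m̄, j_Ω) is a Springer inversion of Υ; (2) (m̄, j_Υ) is a Springer inversion of Ω; (3) j_Υ = j_Ω. -/
open Finset

/-- The content interval `[n-m+1, n]` of a shifted tableau. -/
def content (n m : ℕ) : Finset ℕ := Finset.Icc (n - m + 1) n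

lemma content_mono (n m : ℕ) : content n (m - 1) ⊆ content n m := by
  intro x hx
  simp only [content, Finset.mem_Icc] at *
  omega

/-- A (shifted) row-strict composition tableau of shape `β` (a weak composition of `m` with
`k` parts) and content `[n-m+1, n]`, encoded by the assignment of each entry to its row.
(The filling of each row is determined by its set of entries, since entries strictly decrease
from left to right in each row.) -/
abbrev RSCT (n m k : ℕ) (β : Fin k → ℕ) : Type :=
  {row : {i : ℕ // i ∈ content n m} → Fin k //
    ∀ j : Fin k, (Finset.univ.filter fun i => row i = j).card = β j}

/-- The (0-indexed) column of entry `i`: the number of larger entries in its own row. -/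
def colOf {n m k : ℕ} {β : Fin k → ℕ} (T : RSCT n m k β)
    (i : {a : ℕ // a ∈ content n m}) : ℕ :=
  (Finset.univ.filter fun i' : {a : ℕ // a ∈ content n m} =>
    T.val i' = T.val i ∧ (i : ℕ) < (i' : ℕ)).card

/-- `(i, j)` is a Springer inversion of `T`: there is an entry `i' > i` in row `j` that is
either directly above `i` in the same column, or in a column strictly to the right of the
column of `i`. -/
def isInv {n m k : ℕ} {β : Fin k → ℕ} (T : RSCT n m k β) (i : ℕ) (j : Fin k) : Prop :=
  ∃ (hi : i ∈ content n m) (i' : {a : ℕ // a ∈ content n m}),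
    T.val i' = j ∧ i < (i' : ℕ) ∧
      (colOf T ⟨i, hi⟩ < colOf T i' ∨
        (colOf T i' = colOf T ⟨i, hi⟩ ∧ j < T.val ⟨i, hi⟩))

/-- The finite set of Springer inversions of `T`. -/
noncomputable def InvF {n m k : ℕ} {β : Fin k → ℕ} (T : RSCT n m k β) :
    Finset (ℕ × Fin k) :=
  @Finset.filter (ℕ × Fin k) (fun p => isInv T p.1 p.2) (Classical.decPred _)
    ((content n m) ×ˢ (Finset.univ : Finset (Fin k)))

/-- The inversion vector of `T`: `invVec T i` is the number of Springer inversions of `T`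
with first coordinate `i`. -/
noncomputable def invVec {n m k : ℕ} {β : Fin k → ℕ} (T : RSCT n m k β) (i : ℕ) : ℕ :=
  ((InvF T).filter fun p => p.1 = i).card

/-- `etaRel T T'` expresses that `T'` is obtained from `T` by removing the box containing
the minimal entry `n - m + 1` (which lies at the end of its row). -/
def etaRel {n m k : ℕ} {β β' : Fin k → ℕ} (T : RSCT n m k β)
    (T' : RSCT n (m - 1) k β') : Prop :=
  (∃ h : n - m + 1 ∈ content n m,
      β' = Function.update β (T.val ⟨n - m + 1, h⟩) (β (T.val ⟨n - m + 1, h⟩) - 1)) ∧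
  ∀ (i : ℕ) (hi : i ∈ content n (m - 1)),
      T'.val ⟨i, hi⟩ = T.val ⟨i, content_mono n m hi⟩

/-!
The minimal entry `m̄` is the last box of its row `j_T`, and every other entry exceeds it. Hence
`(m̄, j)` is a Springer inversion of `T` exactly when row `j` is longer than row `j_T`, or equally
long and above it: that is, when `j` comes after `j_T` in the linear order on rows comparing first
lengths and then reversed indices. The trichotomy is the trichotomy of this linear order.
-/

section Columns

variable {n m k : ℕ} {β : Fin k → ℕ} (T : RSCT n m k β)

lemma colOf_lt (i : {a : ℕ // a ∈ content n m}) : colOf T i < β (T.val i) := by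
  rw [← T.2 (T.val i)]
  refine card_lt_card ⟨fun x hx => (mem_filter.mp hx).2.1 ▸ by simp, fun hsub => ?_⟩
  simpa [colOf] using hsub (by simp : i ∈ univ.filter fun i' => T.val i' = T.val i)

lemma colOf_lt_colOf {i₁ i₂ : {a : ℕ // a ∈ content n m}} (hrow : T.val i₁ = T.val i₂)
    (hlt : (i₁ : ℕ) < i₂) : colOf T i₂ < colOf T i₁ := by
  refine card_lt_card ⟨fun x hx => ?_, fun hsub => ?_⟩
  · simp only [mem_filter, mem_univ, true_and] at hx ⊢
    exact ⟨hx.1.trans hrow.symm, hlt.trans hx.2⟩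
  · simpa using hsub (by simpa using ⟨hrow.symm, hlt⟩ :
      i₂ ∈ univ.filter fun i' => T.val i' = T.val i₁ ∧ (i₁ : ℕ) < i')

lemma colOf_injOn_row (j : Fin k) :
    Set.InjOn (colOf T) {i | T.val i = j} := by
  intro i₁ h₁ i₂ h₂ heq
  have hrow : T.val i₁ = T.val i₂ := h₁.trans h₂.symm
  rcases lt_trichotomy (i₁ : ℕ) i₂ with hlt | hval | hlt
  · exact absurd heq (colOf_lt_colOf T hrow hlt).ne'
  · exact Subtype.ext hval
  · exact absurd heq (colOf_lt_colOf T hrow.symm hlt).ne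

lemma exists_colOf_eq (j : Fin k) {c : ℕ} (hc : c < β j) :
    ∃ i : {a : ℕ // a ∈ content n m}, T.val i = j ∧ colOf T i = c := by
  obtain ⟨i, hi, hci⟩ := surj_on_of_inj_on_of_card_le
    (s := univ.filter fun i => T.val i = j) (t := range (β j)) (fun i _ => colOf T i)
    (fun i hi => mem_range.mpr ((mem_filter.mp hi).2 ▸ colOf_lt T i))
    (fun i₁ i₂ h₁ h₂ heq => colOf_injOn_row T j (mem_filter.mp h₁).2 (mem_filter.mp h₂).2 heq)
    (by rw [T.2 j, card_range]) c (mem_range.mpr hc)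
  exact ⟨i, (mem_filter.mp hi).2, hci.symm⟩

end Columns

lemma le_of_mem_content {n m : ℕ} (i : {a : ℕ // a ∈ content n m}) : n - m + 1 ≤ (i : ℕ) :=
  (mem_Icc.mp i.2).1

def rowKey {k : ℕ} (β : Fin k → ℕ) (j : Fin k) : ℕ ×ₗ (Fin k)ᵒᵈ :=
  toLex (β j, OrderDual.toDual j)

lemma rowKey_injective {k : ℕ} (β : Fin k → ℕ) : Function.Injective (rowKey β) :=
  fun _ _ h => (by simpa [rowKey] using h : _ ∧ _).2

lemma rowKey_lt_rowKey_iff {k : ℕ} (β : Fin k → ℕ) (j j' : Fin k) :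
    rowKey β j < rowKey β j' ↔ β j < β j' ∨ (β j = β j' ∧ j' < j) :=
  Prod.Lex.toLex_lt_toLex

section MinimalEntry

variable {n m k : ℕ} {β : Fin k → ℕ} (T : RSCT n m k β) {i : ℕ} (hi : i ∈ content n m)
  (hmin : ∀ y : {a : ℕ // a ∈ content n m}, i ≤ y)
include hmin

lemma colOf_add_one_of_forall_le : colOf T ⟨i, hi⟩ + 1 = β (T.val ⟨i, hi⟩) := by
  have hrow : (univ.filter fun i' : {a : ℕ // a ∈ content n m} =>
      T.val i' = T.val ⟨i, hi⟩ ∧ i < i') =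
      (univ.filter fun i' => T.val i' = T.val ⟨i, hi⟩).erase ⟨i, hi⟩ := by
    ext y
    simp only [mem_filter, mem_univ, true_and, mem_erase, ne_eq, Subtype.ext_iff]
    constructor
    · rintro ⟨hy, hlt⟩
      exact ⟨hlt.ne', hy⟩
    · rintro ⟨hne, hy⟩
      exact ⟨hy, lt_of_le_of_ne (hmin y) (Ne.symm hne)⟩
  rw [colOf, hrow, card_erase_of_mem (by simp),
    Nat.sub_add_cancel (card_pos.mpr ⟨⟨i, hi⟩, by simp⟩), T.2]

lemma isInv_iff_rowKey_lt (j : Fin k) :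
    isInv T i j ↔ rowKey β (T.val ⟨i, hi⟩) < rowKey β j := by
  have hlast := colOf_add_one_of_forall_le T hi hmin
  have hcol := colOf_lt T
  have hgt : ∀ y : {a : ℕ // a ∈ content n m}, T.val y ≠ T.val ⟨i, hi⟩ → i < y :=
    fun y hy => lt_of_le_of_ne (hmin y) fun h => hy (congrArg T.val (Subtype.ext h.symm))
  rw [rowKey_lt_rowKey_iff]
  constructor
  · rintro ⟨hi', y, rfl, -, hy⟩
    obtain rfl : hi = hi' := rfl
    have := hcol y
    rcases hy with hright | ⟨hcol_eq, hj⟩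
    · exact Or.inl (by omega)
    · rcases (show β (T.val ⟨i, hi⟩) ≤ β (T.val y) by omega).lt_or_eq with hβ | hβ
      · exact Or.inl hβ
      · exact Or.inr ⟨hβ, hj⟩
  · rintro (hβ | ⟨hβ, hj⟩)
    · obtain ⟨y, rfl, hy⟩ := exists_colOf_eq T j (c := β j - 1) (by omega)
      exact ⟨hi, y, rfl, hgt y fun h => by rw [h] at hβ; omega, Or.inl (by omega)⟩
    · obtain ⟨y, rfl, hy⟩ := exists_colOf_eq T j (c := colOf T ⟨i, hi⟩) (by omega)
      exact ⟨hi, y, rfl, hgt y (ne_of_lt hj), Or.inr ⟨hy, hj⟩⟩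

end MinimalEntry

/-- trichotomy lemma.  Let `Υ, Ω` be row-strict composition tableaux of the
same shape `β` (a composition of `m ≤ n`, content `[m̄, n]` with `m̄ = n - m + 1`), and let
`j_Υ, j_Ω` be the rows containing the minimal entry `m̄` in `Υ` and `Ω`.  Then exactly one of
the following holds: (1) `(m̄, j_Ω)` is a Springer inversion of `Υ`; (2) `(m̄, j_Υ)` is a
Springer inversion of `Ω`; (3) `j_Υ = j_Ω`. -/
theorem stmt1 (n m k : ℕ) (hm1 : 1 ≤ m) (hmn : m ≤ n) (β : Fin k → ℕ)
    (Υ Ω : RSCT n m k β)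
    (jU jO : Fin k)
    (hjU : jU = Υ.val ⟨n - m + 1, by simp only [content, Finset.mem_Icc]; omega⟩)
    (hjO : jO = Ω.val ⟨n - m + 1, by simp only [content, Finset.mem_Icc]; omega⟩) :
    (isInv Υ (n - m + 1) jO ∧ ¬ isInv Ω (n - m + 1) jU ∧ jU ≠ jO) ∨
    (¬ isInv Υ (n - m + 1) jO ∧ isInv Ω (n - m + 1) jU ∧ jU ≠ jO) ∨
    (¬ isInv Υ (n - m + 1) jO ∧ ¬ isInv Ω (n - m + 1) jU ∧ jU = jO) := by
  have hmem : n - m + 1 ∈ content n m := by simp only [content, mem_Icc]; omega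
  rw [isInv_iff_rowKey_lt Υ hmem le_of_mem_content, isInv_iff_rowKey_lt Ω hmem le_of_mem_content,
    ← hjU, ← hjO, ← (rowKey_injective β).eq_iff, ← (rowKey_injective β).ne_iff]
  rcases lt_trichotomy (rowKey β jU) (rowKey β jO) with h | h | h
  · exact Or.inl ⟨h, h.not_gt, h.ne⟩
  · exact Or.inr (Or.inr ⟨h.not_lt, h.not_gt, h⟩)
  · exact Or.inr (Or.inl ⟨h.not_gt, h, h.ne'⟩)
end

section
/- The map η from row-strict composition tableaux of shape β with content [m̄, n] to the disjoint union, over all compositions β′ obtained from β by deleting one box from a nonzero row, of row-strict composition tableaux of shape β′ with content [m̄+1, n], given by removing the box containing the minimal entry m̄, is a bijection. -/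
open Finset

lemma mem_content_self {n m : ℕ} (hm1 : 1 ≤ m) (hmn : m ≤ n) :
    n - m + 1 ∈ content n m := by
  simp only [content, Finset.mem_Icc]; omega

lemma not_mem_content_pred {n m : ℕ} (hm1 : 1 ≤ m) (hmn : m ≤ n) :
    n - m + 1 ∉ content n (m - 1) := by
  simp only [content, Finset.mem_Icc]; omega

lemma mem_content_pred_iff {n m : ℕ} (hm1 : 1 ≤ m) (hmn : m ≤ n) (a : ℕ) :
    a ∈ content n (m - 1) ↔ a ∈ content n m ∧ a ≠ n - m + 1 := by
  simp only [content, Finset.mem_Icc]; omega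

lemma cnt_lemma {n m k : ℕ} (hm1 : 1 ≤ m) (hmn : m ≤ n)
    (f : {a : ℕ // a ∈ content n m} → Fin k)
    (g : {a : ℕ // a ∈ content n (m - 1)} → Fin k)
    (hfg : ∀ (i : ℕ) (hi : i ∈ content n (m - 1)),
      g ⟨i, hi⟩ = f ⟨i, content_mono n m hi⟩)
    (j : Fin k) :
    (Finset.univ.filter fun i => f i = j).card =
      (Finset.univ.filter fun i => g i = j).card +
        (if f ⟨n - m + 1, mem_content_self hm1 hmn⟩ = j then 1 else 0) := by
  classical
  set A := (Finset.univ.filter fun i => f i = j).image Subtype.val with hA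
  set B := (Finset.univ.filter fun i => g i = j).image Subtype.val with hB
  have hAmem : ∀ a : ℕ, a ∈ A ↔ ∃ h : a ∈ content n m, f ⟨a, h⟩ = j := by
    intro a
    simp only [hA, Finset.mem_image, Finset.mem_filter, Finset.mem_univ, true_and]
    constructor
    · rintro ⟨⟨x, hx⟩, hfx, rfl⟩; exact ⟨hx, hfx⟩
    · rintro ⟨h, hf⟩; exact ⟨⟨a, h⟩, hf, rfl⟩
  have hBmem : ∀ a : ℕ, a ∈ B ↔
      ∃ h : a ∈ content n (m - 1), f ⟨a, content_mono n m h⟩ = j := by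
    intro a
    simp only [hB, Finset.mem_image, Finset.mem_filter, Finset.mem_univ, true_and]
    constructor
    · rintro ⟨⟨x, hx⟩, hgx, rfl⟩; exact ⟨hx, by rw [← hfg x hx]; exact hgx⟩
    · rintro ⟨h, hf⟩; exact ⟨⟨a, h⟩, by rw [hfg a h]; exact hf, rfl⟩
  have hcardA : A.card = (Finset.univ.filter fun i => f i = j).card :=
    Finset.card_image_of_injective _ Subtype.val_injective
  have hcardB : B.card = (Finset.univ.filter fun i => g i = j).card :=
    Finset.card_image_of_injective _ Subtype.val_injective
  have hnB : (n - m + 1) ∉ B := by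
    rw [hBmem]
    rintro ⟨h, -⟩
    exact not_mem_content_pred hm1 hmn h
  by_cases hj : f ⟨n - m + 1, mem_content_self hm1 hmn⟩ = j
  · have hAB : A = insert (n - m + 1) B := by
      ext a
      rw [hAmem, Finset.mem_insert, hBmem]
      constructor
      · rintro ⟨h, hf⟩
        by_cases ha : a = n - m + 1
        · exact Or.inl ha
        · exact Or.inr ⟨(mem_content_pred_iff hm1 hmn a).2 ⟨h, ha⟩, hf⟩
      · rintro (rfl | ⟨h, hf⟩)
        · exact ⟨mem_content_self hm1 hmn, hj⟩
        · exact ⟨content_mono n m h, hf⟩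
    rw [← hcardA, ← hcardB, hAB, Finset.card_insert_of_notMem hnB, if_pos hj]
  · have hAB : A = B := by
      ext a
      rw [hAmem, hBmem]
      constructor
      · rintro ⟨h, hf⟩
        have ha : a ≠ n - m + 1 := by
          rintro rfl
          exact hj hf
        exact ⟨(mem_content_pred_iff hm1 hmn a).2 ⟨h, ha⟩, hf⟩
      · rintro ⟨h, hf⟩
        exact ⟨content_mono n m h, hf⟩
    rw [← hcardA, ← hcardB, hAB, if_neg hj, Nat.add_zero]

/-- The map `η` — removing the box containing the minimal entry `m̄` — from
row-strict composition tableaux of shape `β` with content `[m̄, n]` to the disjoint union,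
over all compositions `β'` obtained from `β` by deleting one box from a nonzero row, of
row-strict composition tableaux of shape `β'` with content `[m̄+1, n]`, is a bijection:
it is defined and single-valued on every tableau, and every tableau of every such shape `β'`
has exactly one preimage. -/
theorem stmt3 (n m k : ℕ) (hm1 : 1 ≤ m) (hmn : m ≤ n) (β : Fin k → ℕ)
    (hsum : ∑ j, β j = m) :
    (∀ T : RSCT n m k β, ∃ (β' : Fin k → ℕ) (T' : RSCT n (m - 1) k β'), etaRel T T') ∧
    (∀ (T : RSCT n m k β) (β' : Fin k → ℕ) (T₁' T₂' : RSCT n (m - 1) k β'),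
        etaRel T T₁' → etaRel T T₂' → T₁' = T₂') ∧
    (∀ β' : Fin k → ℕ, (∃ j : Fin k, β j ≠ 0 ∧ β' = Function.update β j (β j - 1)) →
        ∀ T' : RSCT n (m - 1) k β', ∃! T : RSCT n m k β, etaRel T T') := by
  classical
  have h0 : n - m + 1 ∈ content n m := mem_content_self hm1 hmn
  refine ⟨?_, ?_, ?_⟩
  · -- existence of the image
    intro T
    set j0 := T.val ⟨n - m + 1, h0⟩ with hj0
    set g : {a : ℕ // a ∈ content n (m - 1)} → Fin k :=
      fun i => T.val ⟨i.val, content_mono n m i.2⟩ with hgdef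
    refine ⟨Function.update β j0 (β j0 - 1),
      ⟨g, ?_⟩, ⟨h0, rfl⟩, fun i hi => rfl⟩
    intro j
    have hc := cnt_lemma hm1 hmn T.val g (fun i hi => rfl) j
    rw [T.2 j] at hc
    rw [Function.update_apply]
    by_cases hjj : j = j0
    · rw [if_pos hjj]
      rw [if_pos hjj.symm] at hc
      rw [hjj] at hc ⊢
      omega
    · rw [if_neg hjj]
      rw [if_neg (fun h => hjj h.symm)] at hc
      omega
  · -- single-valuedness
    intro T β' T₁' T₂' h1 h2
    apply Subtype.ext
    funext i
    obtain ⟨i, hi⟩ := i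
    rw [h1.2 i hi, h2.2 i hi]
  · -- every tableau of every admissible shape has exactly one preimage
    rintro β' ⟨j, hβj, rfl⟩ T'
    set f : {a : ℕ // a ∈ content n m} → Fin k :=
      fun i => if h : i.val ∈ content n (m - 1) then T'.val ⟨i.val, h⟩ else j with hf
    have hfg : ∀ (i : ℕ) (hi : i ∈ content n (m - 1)),
        T'.val ⟨i, hi⟩ = f ⟨i, content_mono n m hi⟩ := by
      intro i hi
      simp only [hf, dif_pos hi]
    have hfm : f ⟨n - m + 1, h0⟩ = j := by
      simp only [hf, dif_neg (not_mem_content_pred hm1 hmn)]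
    have hTcard : ∀ j' : Fin k,
        (Finset.univ.filter fun i => f i = j').card = β j' := by
      intro j'
      have hc := cnt_lemma hm1 hmn f T'.val hfg j'
      rw [T'.2 j', hfm] at hc
      rw [Function.update_apply] at hc
      by_cases hjj : j' = j
      · subst hjj
        rw [if_pos rfl, if_pos rfl] at hc
        omega
      · have e1 : ¬ j' = j := hjj
        have e2 : ¬ j = j' := fun h => hjj h.symm
        rw [if_neg e1, if_neg e2] at hc
        omega
    set T : RSCT n m k β := ⟨f, hTcard⟩ with hT
    have hjT : T.val ⟨n - m + 1, h0⟩ = j := hfm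
    refine ⟨T, ⟨⟨h0, by rw [hjT]⟩, fun i hi => (hfg i hi)⟩, ?_⟩
    · intro T₂ hT₂
      obtain ⟨⟨h, hb⟩, hres⟩ := hT₂
      have hj2 : T₂.val ⟨n - m + 1, h⟩ = j := by
        by_contra hne
        have hcf := congrFun hb j
        rw [Function.update_apply, if_pos rfl, Function.update_apply,
          if_neg (fun hh => hne hh.symm)] at hcf
        omega
      apply Subtype.ext
      funext i
      obtain ⟨i, hi⟩ := i
      by_cases hii : i = n - m + 1
      · subst hii
        show T₂.val ⟨n - m + 1, hi⟩ = f ⟨n - m + 1, hi⟩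
        rw [hfm]
        exact hj2
      · have hipred : i ∈ content n (m - 1) :=
          (mem_content_pred_iff hm1 hmn i).2 ⟨hi, hii⟩
        have hv := hres i hipred
        rw [hfg i hipred] at hv
        exact hv.symm
end

section
/- With notation as in the previous statement, if Ω < Υ in the total order on row-strict composition tableaux of shape α, then φ_{w_Ω}(P_Υ) = 0. That is, the matrix [φ_{w_Ω}(P_Υ)] indexed by pairs of tableaux is upper triangular with nonzero diagonal entries with respect to the total order. -/
open Finset

/-- The specification of the recursive total order on row-strict composition tableaux:
if the minimal entries lie in different rows, compare via Springer inversions; if they lie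
in the same row, compare the tableaux obtained by removing the minimal entry; the relation
is empty on empty tableaux. -/
def OrderSpec (n k : ℕ)
    (R : ∀ (m : ℕ) (β : Fin k → ℕ), RSCT n m k β → RSCT n m k β → Prop) : Prop :=
  (∀ (β : Fin k → ℕ) (T T' : RSCT n 0 k β), ¬ R 0 β T T') ∧
  (∀ (m : ℕ) (β : Fin k → ℕ) (Υ Ω : RSCT n m k β) (h : n - m + 1 ∈ content n m),
      Υ.val ⟨n - m + 1, h⟩ ≠ Ω.val ⟨n - m + 1, h⟩ →
      (R m β Ω Υ ↔ isInv Υ (n - m + 1) (Ω.val ⟨n - m + 1, h⟩))) ∧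
  (∀ (m : ℕ) (β : Fin k → ℕ) (Υ Ω : RSCT n m k β) (h : n - m + 1 ∈ content n m),
      Υ.val ⟨n - m + 1, h⟩ = Ω.val ⟨n - m + 1, h⟩ →
      ∀ (β' : Fin k → ℕ) (Υ' Ω' : RSCT n (m - 1) k β'),
        etaRel Υ Υ' → etaRel Ω Ω' → (R m β Ω Υ ↔ R (m - 1) β' Ω' Υ'))

/-- The equivariant Springer monomial `P_Υ(z, x) = ∏_{(i,j) ∈ Inv(Υ)} (x_i − z_j)`,
with `x`-variables indexed by `Sum.inl` and `z`-variables by `Sum.inr`. -/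
noncomputable def Ppoly {n m k : ℕ} {β : Fin k → ℕ} (T : RSCT n m k β) :
    MvPolynomial (ℕ ⊕ Fin k) ℂ :=
  ∏ p ∈ InvF T, (MvPolynomial.X (Sum.inl p.1) - MvPolynomial.X (Sum.inr p.2))

/-- The localization map `φ_{w_Ω}`, substituting `x_i ↦ z_{r(i,Ω)}` where `r(i,Ω)` is the
row of `Ω` containing `i`, and fixing the `z`-variables. -/
noncomputable def loc {n m k : ℕ} {β : Fin k → ℕ} (Ω : RSCT n m k β) :
    MvPolynomial (ℕ ⊕ Fin k) ℂ →ₐ[ℂ] MvPolynomial (Fin k) ℂ :=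
  MvPolynomial.aeval fun v => match v with
    | Sum.inl i => if h : i ∈ content n m then MvPolynomial.X (Ω.val ⟨i, h⟩) else 0
    | Sum.inr j => MvPolynomial.X j

/-- Evaluation of all `z`-variables at `0`. -/
noncomputable def evz (k : ℕ) : MvPolynomial (ℕ ⊕ Fin k) ℂ →ₐ[ℂ] MvPolynomial ℕ ℂ :=
  MvPolynomial.aeval fun v => match v with
    | Sum.inl i => MvPolynomial.X i
    | Sum.inr _ => 0

/-- The Lehmer code of a permutation: `pcode w k = #{j > k : w j < w k}`. -/
def pcode {n : ℕ} (w : Equiv.Perm (Fin n)) (i : Fin n) : ℕ :=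
  (Finset.univ.filter fun j => i < j ∧ w j < w i).card

/-- The Coxeter length of a permutation: its number of inversions. -/
def plen {n : ℕ} (w : Equiv.Perm (Fin n)) : ℕ :=
  (Finset.univ.filter fun p : Fin n × Fin n => p.1 < p.2 ∧ w p.2 < w p.1).card


section Aux

open Finset

variable {n m k : ℕ} {β β' : Fin k → ℕ}

lemma card_filter_univ_eq {s : Finset ℕ} (p : {x // x ∈ s} → Prop) [DecidablePred p]
    (q : ℕ → Prop) [DecidablePred q] (hpq : ∀ x : {a // a ∈ s}, p x ↔ q x.1) :
    (Finset.univ.filter p).card = (s.filter q).card := by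
  apply Finset.card_bij (fun (x : {a // a ∈ s}) _ => x.1)
  · intro a ha
    rw [Finset.mem_filter] at ha ⊢
    exact ⟨a.2, (hpq a).1 ha.2⟩
  · intro a _ b _ hab
    exact Subtype.ext hab
  · intro b hb
    rw [Finset.mem_filter] at hb
    exact ⟨⟨b, hb.1⟩, Finset.mem_filter.2 ⟨Finset.mem_univ _, (hpq _).2 hb.2⟩, rfl⟩


lemma mem_InvF {T : RSCT n m k β} {q : ℕ × Fin k} :
    q ∈ InvF T ↔ q.1 ∈ content n m ∧ isInv T q.1 q.2 := by
  rw [InvF, @Finset.mem_filter _ _ (Classical.decPred _), Finset.mem_product]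
  constructor
  · rintro ⟨⟨h1, -⟩, h2⟩; exact ⟨h1, h2⟩
  · rintro ⟨h1, h2⟩; exact ⟨⟨h1, Finset.mem_univ _⟩, h2⟩

lemma colOf_eq (T : RSCT n m k β) (x : {a : ℕ // a ∈ content n m}) :
    colOf T x = ((content n m).filter
      (fun a => (∀ h : a ∈ content n m, T.val ⟨a, h⟩ = T.val x) ∧ (x : ℕ) < a)).card := by
  classical
  unfold colOf
  exact card_filter_univ_eq _ _
    (fun i' => ⟨fun hx => ⟨fun _ => hx.1, hx.2⟩, fun hq => ⟨hq.1 i'.2, hq.2⟩⟩)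

lemma hcount (T : RSCT n m k β) (j : Fin k) :
    ((content n m).filter (fun a => ∀ h : a ∈ content n m, T.val ⟨a, h⟩ = j)).card = β j := by
  classical
  rw [← T.2 j]
  exact (card_filter_univ_eq _ _ (fun x => ⟨fun hx _ => hx, fun hq => hq x.2⟩)).symm

lemma content_succ (hmn : m + 1 ≤ n) :
    content n (m + 1) = insert (n - (m + 1) + 1) (content n m) := by
  ext a
  simp only [content, Finset.mem_Icc, Finset.mem_insert]
  omega

lemma min_not_mem (hmn : m + 1 ≤ n) : (n - (m + 1) + 1) ∉ content n m := by
  simp only [content, Finset.mem_Icc]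
  omega

lemma removeCard (hmn : m + 1 ≤ n) (T : RSCT n (m+1) k β) (j₀ : Fin k)
    (h : n - (m+1) + 1 ∈ content n (m+1)) (hT : T.val ⟨n - (m+1) + 1, h⟩ = j₀) (j : Fin k) :
    (Finset.univ.filter fun i : {x : ℕ // x ∈ content n m} =>
        T.val ⟨i.1, content_mono n (m+1) i.2⟩ = j).card
      = Function.update β j₀ (β j₀ - 1) j := by
  classical
  have hQ := hcount T j
  have hL : (Finset.univ.filter fun i : {x : ℕ // x ∈ content n m} =>
        T.val ⟨i.1, content_mono n (m+1) i.2⟩ = j).card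
      = ((content n m).filter
          (fun a => ∀ h' : a ∈ content n (m+1), T.val ⟨a, h'⟩ = j)).card :=
    card_filter_univ_eq _ _ (fun x => ⟨fun hx _ => hx, fun hq => hq _⟩)
  have hmemS : ∀ a : ℕ, a ∈ content n (m+1) ↔ a = n - (m+1) + 1 ∨ a ∈ content n m := by
    intro a
    rw [content_succ hmn, Finset.mem_insert]
  by_cases hj : j = j₀
  · subst hj
    have hsplit : (content n (m+1)).filter
          (fun a => ∀ h' : a ∈ content n (m+1), T.val ⟨a, h'⟩ = j)
        = insert (n - (m+1) + 1) ((content n m).filter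
          (fun a => ∀ h' : a ∈ content n (m+1), T.val ⟨a, h'⟩ = j)) := by
      ext a
      rw [Finset.mem_filter, Finset.mem_insert, Finset.mem_filter]
      constructor
      · rintro ⟨ha, hQa⟩
        rcases (hmemS a).1 ha with h1 | h1
        · exact Or.inl h1
        · exact Or.inr ⟨h1, hQa⟩
      · rintro (h1 | ⟨h1, h2⟩)
        · subst h1
          exact ⟨h, fun _ => hT⟩
        · exact ⟨(hmemS a).2 (Or.inr h1), h2⟩
    rw [hsplit, Finset.card_insert_of_notMem
      (fun hc => min_not_mem hmn (Finset.mem_filter.1 hc).1)] at hQ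
    rw [hL, Function.update_self]
    omega
  · have hsplit : (content n (m+1)).filter
          (fun a => ∀ h' : a ∈ content n (m+1), T.val ⟨a, h'⟩ = j)
        = (content n m).filter
          (fun a => ∀ h' : a ∈ content n (m+1), T.val ⟨a, h'⟩ = j) := by
      ext a
      rw [Finset.mem_filter, Finset.mem_filter]
      constructor
      · rintro ⟨ha, hQa⟩
        rcases (hmemS a).1 ha with h1 | h1
        · subst h1
          exact absurd ((hQa h).symm.trans hT) hj
        · exact ⟨h1, hQa⟩
      · rintro ⟨h1, h2⟩
        exact ⟨(hmemS a).2 (Or.inr h1), h2⟩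
    rw [hsplit] at hQ
    rw [hL, Function.update_of_ne hj, hQ]

lemma colOf_remove (hmn : m + 1 ≤ n) (T : RSCT n (m+1) k β) (T' : RSCT n m k β')
    (hval : ∀ i : {x : ℕ // x ∈ content n m},
      T'.val i = T.val ⟨i.1, content_mono n (m+1) i.2⟩)
    (x : {a : ℕ // a ∈ content n m}) :
    colOf T' x = colOf T ⟨x.1, content_mono n (m+1) x.2⟩ := by
  classical
  rw [colOf_eq, colOf_eq]
  congr 1
  ext a
  simp only [Finset.mem_filter]
  have hx1 : n - m + 1 ≤ x.1 ∧ x.1 ≤ n := by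
    have hx := x.2
    simp only [content, Finset.mem_Icc] at hx
    exact hx
  constructor
  · rintro ⟨ha, hcond, hlt⟩
    refine ⟨content_mono n (m+1) ha, ?_, hlt⟩
    intro h
    have h1 := hcond ha
    rw [hval ⟨a, ha⟩, hval x] at h1
    exact h1
  · rintro ⟨ha, hcond, hlt⟩
    have haIcc : n - (m+1) + 1 ≤ a ∧ a ≤ n := by
      have ha2 := ha
      simp only [content, Finset.mem_Icc] at ha2
      exact ha2
    have ha' : a ∈ content n m := by
      simp only [content, Finset.mem_Icc]; omega
    refine ⟨ha', ?_, hlt⟩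
    intro h
    rw [hval ⟨a, h⟩, hval x]
    exact hcond (content_mono n (m+1) ha')

lemma isInv_remove (hmn : m + 1 ≤ n) (T : RSCT n (m+1) k β) (T' : RSCT n m k β')
    (hval : ∀ i : {x : ℕ // x ∈ content n m},
      T'.val i = T.val ⟨i.1, content_mono n (m+1) i.2⟩)
    (i : ℕ) (j : Fin k) (hInv : isInv T' i j) : isInv T i j := by
  obtain ⟨hi, i', hrow, hlt, hcol⟩ := hInv
  refine ⟨content_mono n (m+1) hi, ⟨i'.1, content_mono n (m+1) i'.2⟩, ?_, hlt, ?_⟩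
  · rw [← hval i']; exact hrow
  · have e1 : colOf T ⟨i, content_mono n (m+1) hi⟩ = colOf T' ⟨i, hi⟩ :=
      (colOf_remove hmn T T' hval ⟨i, hi⟩).symm
    have e2 : colOf T ⟨i'.1, content_mono n (m+1) i'.2⟩ = colOf T' i' :=
      (colOf_remove hmn T T' hval i').symm
    have e3 : T.val ⟨i, content_mono n (m+1) hi⟩ = T'.val ⟨i, hi⟩ :=
      (hval ⟨i, hi⟩).symm
    rw [e1, e2, e3]
    exact hcol

lemma noInv_self (T : RSCT n m k β) (i : ℕ) (hi : i ∈ content n m) :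
    ¬ isInv T i (T.val ⟨i, hi⟩) := by
  rintro ⟨hi', i', hrow, hlt, hcol⟩
  have hcol' : colOf T i' < colOf T ⟨i, hi'⟩ := by
    apply Finset.card_lt_card
    rw [Finset.ssubset_def]
    constructor
    · intro x hx
      rw [Finset.mem_filter] at hx ⊢
      refine ⟨Finset.mem_univ _, ?_, lt_trans hlt hx.2.2⟩
      rw [hx.2.1, hrow]
    · intro hsub
      have hmem : i' ∈ Finset.univ.filter fun i'' : {a : ℕ // a ∈ content n m} =>
          T.val i'' = T.val ⟨i, hi'⟩ ∧ (i : ℕ) < (i'' : ℕ) :=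
        Finset.mem_filter.2 ⟨Finset.mem_univ _, hrow, hlt⟩
      have := (Finset.mem_filter.1 (hsub hmem)).2.2
      exact lt_irrefl _ this
  rcases hcol with h1 | ⟨_, h3⟩
  · exact absurd h1 (lt_asymm hcol')
  · exact lt_irrefl _ h3

lemma key (n k : ℕ) (R : ∀ (m : ℕ) (β : Fin k → ℕ), RSCT n m k β → RSCT n m k β → Prop)
    (hR : OrderSpec n k R) :
    ∀ m, m ≤ n → ∀ (β : Fin k → ℕ) (Υ Ω : RSCT n m k β), R m β Ω Υ →
      ∃ (i : ℕ) (hi : i ∈ content n m), (i, Ω.val ⟨i, hi⟩) ∈ InvF Υ := by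
  intro m
  induction m with
  | zero =>
    intro _ β Υ Ω hlt
    exact absurd hlt (hR.1 β Ω Υ)
  | succ m ih =>
    intro hmn β Υ Ω hlt
    have h : n - (m+1) + 1 ∈ content n (m+1) := by
      simp only [content, Finset.mem_Icc]; omega
    by_cases hrow : Υ.val ⟨n - (m+1) + 1, h⟩ = Ω.val ⟨n - (m+1) + 1, h⟩
    · -- minimal entries in the same row: recurse
      set j₀ := Υ.val ⟨n - (m+1) + 1, h⟩ with hj₀
      set β' := Function.update β j₀ (β j₀ - 1) with hβ'
      let Υ' : RSCT n m k β' :=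
        ⟨fun i => Υ.val ⟨i.1, content_mono n (m+1) i.2⟩, removeCard hmn Υ j₀ h rfl⟩
      let Ω' : RSCT n m k β' :=
        ⟨fun i => Ω.val ⟨i.1, content_mono n (m+1) i.2⟩, removeCard hmn Ω j₀ h hrow.symm⟩
      have hηΥ : etaRel Υ Υ' := ⟨⟨h, rfl⟩, fun i hi => rfl⟩
      have hηΩ : etaRel Ω Ω' := ⟨⟨h, by rw [← hrow]⟩, fun i hi => rfl⟩
      have hR' : R m β' Ω' Υ' :=
        (hR.2.2 (m+1) β Υ Ω h hrow β' Υ' Ω' hηΥ hηΩ).1 hlt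
      obtain ⟨i, hi, hmem⟩ := ih (by omega) β' Υ' Ω' hR'
      refine ⟨i, content_mono n (m+1) hi, ?_⟩
      rw [mem_InvF] at hmem ⊢
      refine ⟨content_mono n (m+1) hi, ?_⟩
      have hΩeq : Ω.val ⟨i, content_mono n (m+1) hi⟩ = Ω'.val ⟨i, hi⟩ := rfl
      rw [hΩeq]
      exact isInv_remove hmn Υ Υ' (fun _ => rfl) i _ hmem.2
    · -- minimal entries in different rows
      have hInv : isInv Υ (n - (m+1) + 1) (Ω.val ⟨n - (m+1) + 1, h⟩) :=
        (hR.2.1 (m+1) β Υ Ω h hrow).1 hlt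
      exact ⟨n - (m+1) + 1, h, mem_InvF.2 ⟨h, hInv⟩⟩

end Aux

/-- With notation as in Statement 7, if `Ω < Υ` in the recursive total
order on row-strict composition tableaux of shape `α`, then `φ_{w_Ω}(P_Υ) = 0`; together
with `φ_{w_Υ}(P_Υ) ≠ 0`, the matrix `[φ_{w_Ω}(P_Υ)]` is upper triangular with nonzero
diagonal entries with respect to the total order. -/
theorem stmt8 (n k : ℕ) (α : Fin k → ℕ) (hpos : ∀ j, 0 < α j) (hsum : ∑ j, α j = n)
    (R : ∀ (m : ℕ) (β : Fin k → ℕ), RSCT n m k β → RSCT n m k β → Prop)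
    (hR : OrderSpec n k R) (Υ Ω : RSCT n n k α) (hlt : R n α Ω Υ) :
    loc Ω (Ppoly Υ) = 0 ∧ loc Υ (Ppoly Υ) ≠ 0 := by
  constructor
  · obtain ⟨i, hi, hmem⟩ := key n k R hR n le_rfl α Υ Ω hlt
    rw [Ppoly, map_prod]
    apply Finset.prod_eq_zero hmem
    simp only [map_sub, loc, MvPolynomial.aeval_X]
    rw [dif_pos hi]
    exact sub_self _
  · intro h0
    rw [Ppoly, map_prod] at h0
    obtain ⟨p, hp, hfac⟩ := Finset.prod_eq_zero_iff.1 h0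
    rw [mem_InvF] at hp
    obtain ⟨hic, hInv⟩ := hp
    rw [map_sub] at hfac
    simp only [loc, MvPolynomial.aeval_X] at hfac
    rw [dif_pos hic] at hfac
    have hXeq : (MvPolynomial.X (Υ.val ⟨p.1, hic⟩) : MvPolynomial (Fin k) ℂ)
        = MvPolynomial.X p.2 := by
      have := sub_eq_zero.1 hfac
      exact this
    have hveq : Υ.val ⟨p.1, hic⟩ = p.2 := MvPolynomial.X_injective hXeq
    exact noInv_self Υ p.1 hic (hveq ▸ hInv)
end

section
/- Let w ∈ S_n with ℓ(w) > 0, let k₀ be the smallest index with γ_{k₀}(w) ≠ 0 in the Lehmer code of w, and let j₀ > k₀ be the unique index with w(k₀) = w(j₀) + 1. Set v = w t_{k₀,j₀} and v′ = v t_{k₀−1,k₀}. Then ℓ(v) = ℓ(w) − 1, ℓ(v′) = ℓ(w), v′ is the unique permutation of the form v t_{j,k₀} with j < k₀ and ℓ(v t_{j,k₀}) = ℓ(v) + 1, and moreover every permutation w′ = v t_{k₀,j} with j > k₀, j ≠ j₀ and ℓ(w′) = ℓ(v) + 1 satisfies w′(k₀) > w(k₀), hence γ_{k₀}(w′) > γ_{k₀}(w)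 while γ_i(w′) = γ_i(w) = 0 for i < k₀. -/
/-!
Everything rests on how the length changes under right multiplication by a transposition:
for `a < b` with `u a < u b`, the involution `swapPair a b` of pairs maps the inversions of `u`,
together with `(a, b)`, into those of `u * swap a b`, and is onto them when no `c ∈ (a, b)` has
`u a < u c < u b`; so `ℓ(u t_{a,b}) = ℓ(u) + 1` in that case. If such a `c` exists, then
`t_{a,b} = t_{a,c} t_{c,b} t_{a,c}` with each factor raising the length, so
`ℓ(u t_{a,b}) ≥ ℓ(u) + 3`.

Vanishing of the Lehmer code below `k₀` means that `w` fixes every `i < k₀`, and then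
`w k₀ = k₀ + γ_{k₀}(w)`. The values `w j₀, w k₀` and the positions `k₀ - 1, k₀` are adjacent,
which gives the two length formulas; any `j < k₀ - 1` has `c = k₀ - 1` between `j` and `k₀`,
which gives uniqueness.
-/

open Finset

open Equiv

variable {n : ℕ}

section Inversions

def inversions (w : Perm (Fin n)) : Finset (Fin n × Fin n) :=
  {p | p.1 < p.2 ∧ w p.2 < w p.1}

lemma plen_eq_card_inversions (w : Perm (Fin n)) : plen w = #(inversions w) := rfl

lemma mem_inversions {w : Perm (Fin n)} {p : Fin n × Fin n} :
    p ∈ inversions w ↔ p.1 < p.2 ∧ w p.2 < w p.1 := by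
  simp [inversions]

def swapPair (a b : Fin n) (p : Fin n × Fin n) : Fin n × Fin n :=
  if (p.1 < p.2 ↔ swap a b p.1 < swap a b p.2) then (swap a b p.1, swap a b p.2) else p

lemma swapPair_involutive (a b : Fin n) : Function.Involutive (swapPair a b) := by
  intro p
  unfold swapPair
  split_ifs <;> simp_all

variable {a b : Fin n} {u : Perm (Fin n)}

lemma swapPair_self (hab : a < b) : swapPair a b (a, b) = (a, b) := by
  simp [swapPair, hab, not_lt_of_gt hab]

lemma swapPair_mem_inversions_mul_swap (hab : a < b) (hu : u a < u b) {p : Fin n × Fin n}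
    (hp : p ∈ inversions u) : swapPair a b p ∈ inversions (u * swap a b) := by
  obtain ⟨x, y⟩ := p
  simp only [mem_inversions, swapPair, Perm.mul_apply, swap_apply_def] at *
  split_ifs at * <;> grind

lemma swapPair_mem_insert_inversions (hab : a < b)
    (hgap : ∀ c, a < c → c < b → ¬ (u a < u c ∧ u c < u b)) {p : Fin n × Fin n}
    (hp : p ∈ inversions (u * swap a b)) : swapPair a b p ∈ insert (a, b) (inversions u) := by
  obtain ⟨x, y⟩ := p
  simp only [mem_insert, mem_inversions, swapPair, Perm.mul_apply, swap_apply_def] at *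
  split_ifs at * <;> grind [Equiv.apply_eq_iff_eq]

lemma card_insert_inversions (hu : u a < u b) :
    #(insert (a, b) (inversions u)) = plen u + 1 :=
  card_insert_of_notMem (by simp [mem_inversions, hu.le])

theorem plen_lt_plen_mul_swap (hab : a < b) (hu : u a < u b) :
    plen u < plen (u * swap a b) := by
  rw [Nat.lt_iff_add_one_le, ← card_insert_inversions hu, plen_eq_card_inversions]
  refine card_le_card_of_injOn (swapPair a b) (fun p hp => ?_)
    (swapPair_involutive a b).injective.injOn
  rcases mem_insert.1 hp with rfl | hp
  · rw [swapPair_self hab, mem_coe, mem_inversions]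
    simpa [hab] using hu
  · exact swapPair_mem_inversions_mul_swap hab hu hp

theorem plen_mul_swap_eq_add_one (hab : a < b) (hu : u a < u b)
    (hgap : ∀ c, a < c → c < b → ¬ (u a < u c ∧ u c < u b)) :
    plen (u * swap a b) = plen u + 1 := by
  refine le_antisymm ?_ (plen_lt_plen_mul_swap hab hu)
  rw [← card_insert_inversions hu, plen_eq_card_inversions]
  exact card_le_card_of_injOn (swapPair a b)
    (fun p hp => swapPair_mem_insert_inversions hab hgap hp)
    (swapPair_involutive a b).injective.injOn

theorem plen_mul_swap_eq_add_one_of_val_apply_eq (hab : a < b) (hu : (u b : ℕ) = u a + 1) :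
    plen (u * swap a b) = plen u + 1 :=
  plen_mul_swap_eq_add_one hab (Fin.lt_def.2 (by omega)) fun c _ _ ⟨h₁, h₂⟩ => by
    rw [Fin.lt_def] at h₁ h₂
    omega

theorem plen_mul_swap_eq_add_one_of_val_eq (hab : (b : ℕ) = a + 1) (hu : u a < u b) :
    plen (u * swap a b) = plen u + 1 :=
  plen_mul_swap_eq_add_one (Fin.lt_def.2 (by omega)) hu fun c hac hcb => by
    rw [Fin.lt_def] at hac hcb
    omega

theorem apply_lt_apply_of_plen_lt_plen_mul_swap (hab : a < b)
    (h : plen u < plen (u * swap a b)) : u a < u b := by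
  by_contra! hle
  have hlt : u b < u a := hle.lt_of_ne (u.injective.ne hab.ne')
  have := plen_lt_plen_mul_swap hab (u := u * swap a b) (by simpa using hlt)
  rw [mul_swap_mul_self] at this
  omega

theorem plen_add_three_le_plen_mul_swap {c : Fin n} (hac : a < c) (hcb : c < b)
    (h₁ : u a < u c) (h₂ : u c < u b) : plen u + 3 ≤ plen (u * swap a b) := by
  have hab : a < b := hac.trans hcb
  have hconj : u * swap a c * swap c b * swap a c = u * swap a b := by
    rw [← swap_mul_swap_mul_swap hcb.ne' hab.ne', swap_comm c a, swap_comm b c]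
    simp only [mul_assoc]
  have s₁ := plen_lt_plen_mul_swap hac h₁
  have s₂ := plen_lt_plen_mul_swap hcb (u := u * swap a c)
    (by simpa [swap_apply_of_ne_of_ne hab.ne' hcb.ne'] using h₁.trans h₂)
  have s₃ := plen_lt_plen_mul_swap hac (u := u * swap a c * swap c b)
    (by simpa [swap_apply_of_ne_of_ne hac.ne hab.ne, swap_apply_of_ne_of_ne hab.ne' hcb.ne']
      using h₂)
  rw [hconj] at s₃
  omega

end Inversions

section LehmerCode

variable {w : Perm (Fin n)} {k : Fin n}

lemma pcode_eq_zero_iff {i : Fin n} : pcode w i = 0 ↔ ∀ j, i < j → w i ≤ w j := by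
  simp [pcode, filter_eq_empty_iff]

lemma le_apply_of_forall_lt_apply_eq (hfix : ∀ i < k, w i = i) {j : Fin n} (hj : k ≤ j) :
    k ≤ w j := by
  by_contra! h
  have hj' : w j = j := w.injective (hfix _ h)
  exact absurd (hj' ▸ h) (not_lt_of_ge hj)

lemma forall_lt_pcode_eq_zero_iff :
    (∀ i < k, pcode w i = 0) ↔ ∀ i < k, w i = i := by
  constructor
  · intro h0 i
    induction i using WellFoundedLT.induction with
    | _ i ih =>
      intro hik
      have hfix : ∀ j < i, w j = j := fun j hj => ih j hj (hj.trans hik)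
      have hle : i ≤ w i := le_apply_of_forall_lt_apply_eq hfix le_rfl
      have hle' : i ≤ w.symm i := le_apply_of_forall_lt_apply_eq (w := w.symm)
        (fun j hj => by rw [symm_apply_eq, hfix j hj]) le_rfl
      rcases hle'.eq_or_lt with heq | hlt
      · exact (eq_symm_apply w).1 heq
      · have := pcode_eq_zero_iff.1 (h0 i hik) _ hlt
        rw [apply_symm_apply] at this
        exact le_antisymm this hle
  · intro hfix i hik
    refine pcode_eq_zero_iff.2 fun j hij => ?_
    rw [hfix i hik]
    rcases lt_or_ge j k with hjk | hkj
    · exact (hfix j hjk).symm ▸ hij.le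
    · exact hik.le.trans (le_apply_of_forall_lt_apply_eq hfix hkj)

lemma card_filter_apply_lt (t : Fin n) : #{j | w j < t} = t := by
  rw [← Fin.card_Iio t]
  exact card_nbij' w w.symm (fun j hj => by simpa using hj) (fun j hj => by simpa using hj)
    (fun j _ => by simp) (fun j _ => by simp)

lemma val_apply_eq_add_pcode (hfix : ∀ i < k, w i = i) : (w k : ℕ) = k + pcode w k := by
  have hk : k ≤ w k := le_apply_of_forall_lt_apply_eq hfix le_rfl
  have hsplit : #{j | w j < w k} = #{j | j < k ∨ (k < j ∧ w j < w k)} := by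
    congr 1
    ext j
    simp only [mem_filter, mem_univ, true_and]
    grind
  rw [← card_filter_apply_lt (w k), hsplit, filter_or,
    card_union_of_disjoint (disjoint_filter.2 fun j _ h h' => lt_asymm h h'.1),
    filter_gt_eq_Iio, Fin.card_Iio]
  rfl

lemma pcode_lt_pcode_iff {w' : Perm (Fin n)} (hw : ∀ i < k, w i = i)
    (hw' : ∀ i < k, w' i = i) : pcode w k < pcode w' k ↔ w k < w' k := by
  rw [Fin.lt_def, val_apply_eq_add_pcode hw, val_apply_eq_add_pcode hw']
  omega

end LehmerCode

/-- Let `w ∈ S_n` with `ℓ(w) > 0`, let `k₀` be the smallest index with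
`γ_{k₀}(w) ≠ 0` in the Lehmer code, and `j₀ > k₀` the unique index with `w k₀ = w j₀ + 1`.
Set `v = w t_{k₀,j₀}` and `v′ = v t_{k₀−1,k₀}`.  Then `ℓ(v) = ℓ(w) − 1`, `ℓ(v′) = ℓ(w)`,
`v′` is the unique permutation of the form `v t_{j,k₀}` with `j < k₀` and
`ℓ(v t_{j,k₀}) = ℓ(v) + 1`, and every `w′ = v t_{k₀,j}` with `j > k₀`, `j ≠ j₀`, and
`ℓ(w′) = ℓ(v) + 1` satisfies `w′ k₀ > w k₀`, hence `γ_{k₀}(w′) > γ_{k₀}(w)` while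
`γ_i(w′) = γ_i(w) = 0` for `i < k₀`. -/
theorem stmt12 (n : ℕ) (w : Equiv.Perm (Fin n))
    (k₀ : Fin n) (hmin : ∀ i : Fin n, i < k₀ → pcode w i = 0)
    (j₀ : Fin n) (hj : k₀ < j₀) (hval : (w k₀ : ℕ) = (w j₀ : ℕ) + 1) :
    plen (w * Equiv.swap k₀ j₀) = plen w - 1 ∧
    (∀ j : Fin n, k₀ < j → j ≠ j₀ →
        plen (w * Equiv.swap k₀ j₀ * Equiv.swap k₀ j)
          = plen (w * Equiv.swap k₀ j₀) + 1 →
        (w k₀ : ℕ) < ((w * Equiv.swap k₀ j₀ * Equiv.swap k₀ j) k₀ : ℕ) ∧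
        pcode w k₀ < pcode (w * Equiv.swap k₀ j₀ * Equiv.swap k₀ j) k₀ ∧
        (∀ i : Fin n, i < k₀ →
          pcode (w * Equiv.swap k₀ j₀ * Equiv.swap k₀ j) i = 0)) ∧
    (∀ hpos : 0 < (k₀ : ℕ),
        plen (w * Equiv.swap k₀ j₀ *
            Equiv.swap (⟨(k₀ : ℕ) - 1, by have := k₀.isLt; omega⟩ : Fin n) k₀)
          = plen w ∧
        (∀ j : Fin n, j < k₀ →
          plen (w * Equiv.swap k₀ j₀ * Equiv.swap j k₀)
            = plen (w * Equiv.swap k₀ j₀) + 1 →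
          w * Equiv.swap k₀ j₀ * Equiv.swap j k₀ =
            w * Equiv.swap k₀ j₀ *
              Equiv.swap (⟨(k₀ : ℕ) - 1, by have := k₀.isLt; omega⟩ : Fin n) k₀)) := by
  have hwfix := forall_lt_pcode_eq_zero_iff.1 hmin
  set v := w * swap k₀ j₀
  have hvk : v k₀ = w j₀ := by simp [v]
  have hvfix : ∀ i < k₀, v i = i := fun i hi => by
    simp [v, swap_apply_of_ne_of_ne hi.ne (hi.trans hj).ne, hwfix i hi]
  have hlen : plen v + 1 = plen w := by
    have := plen_mul_swap_eq_add_one_of_val_apply_eq hj (u := v) (by simp [v, hval])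
    rwa [mul_swap_mul_self, eq_comm] at this
  refine ⟨by omega, fun j hkj hjj₀ hlen' => ?_, fun hpos => ?_⟩
  · have hvj : v j = w j := by simp [v, swap_apply_of_ne_of_ne hkj.ne' hjj₀]
    have hvkj : v k₀ < v j := apply_lt_apply_of_plen_lt_plen_mul_swap hkj (by omega)
    have hw'k : (v * swap k₀ j) k₀ = w j := by simp [hvj]
    have hw'fix : ∀ i < k₀, (v * swap k₀ j) i = i := fun i hi => by
      simp [swap_apply_of_ne_of_ne hi.ne (hi.trans hkj).ne, hvfix i hi]
    have hlt : w k₀ < (v * swap k₀ j) k₀ := by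
      rw [hvk, hvj, Fin.lt_def] at hvkj
      have : (w j : ℕ) ≠ w k₀ := fun h => hkj.ne' (w.injective (Fin.ext h))
      rw [hw'k, Fin.lt_def]
      omega
    exact ⟨hlt, (pcode_lt_pcode_iff hwfix hw'fix).2 hlt, forall_lt_pcode_eq_zero_iff.2 hw'fix⟩
  · set a : Fin n := ⟨(k₀ : ℕ) - 1, by omega⟩
    have hak : a < k₀ := Fin.lt_def.2 (by simp [a]; omega)
    have hvak : v a < v k₀ := by
      rw [hvfix a hak, hvk]
      exact hak.trans_le (le_apply_of_forall_lt_apply_eq hwfix hj.le)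
    have hlen_a := plen_mul_swap_eq_add_one_of_val_eq (by simp [a]; omega) hvak
    refine ⟨by omega, fun j hjk hlen_j => ?_⟩
    have hja : j ≤ a := Fin.le_def.2 (by rw [Fin.lt_def] at hjk; simp [a]; omega)
    rcases hja.eq_or_lt with rfl | hja
    · rfl
    · have := plen_add_three_le_plen_mul_swap hja hak (by rwa [hvfix j hjk, hvfix a hak]) hvak
      omega
end

section
/- Let w ∈ S_n with ℓ(w) > 0 and Lehmer code γ, let k₀ be minimal with γ_{k₀} ≠ 0, let v = w t_{k₀,j₀} where j₀ satisfies w(j₀) = w(k₀) − 1, and let δ be the Lehmer code of v. Then δ_i = γ_i for i ≠ k₀ and δ_{k₀} = γ_{k₀} − 1; in particular x^γ = x_{k₀} · x^δ. -/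
open Finset

/-- Let `w ∈ S_n` with `ℓ(w) > 0` and Lehmer code `γ`, let `k₀` be
minimal with `γ_{k₀} ≠ 0`, and let `v = w t_{k₀,j₀}` where `w j₀ = w k₀ − 1`.  Then the
Lehmer code `δ` of `v` satisfies `δ_i = γ_i` for `i ≠ k₀` and `δ_{k₀} = γ_{k₀} − 1`;
in particular `x^γ = x_{k₀} · x^δ`. -/
theorem stmt13 (n : ℕ) (w : Equiv.Perm (Fin n)) (hw : 0 < plen w)
    (k₀ : Fin n) (hk : pcode w k₀ ≠ 0) (hmin : ∀ i : Fin n, i < k₀ → pcode w i = 0)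
    (j₀ : Fin n) (hval : (w j₀ : ℕ) = (w k₀ : ℕ) - 1) :
    (∀ i : Fin n, i ≠ k₀ → pcode (w * Equiv.swap k₀ j₀) i = pcode w i) ∧
    pcode (w * Equiv.swap k₀ j₀) k₀ = pcode w k₀ - 1 ∧
    pcode w k₀ = pcode (w * Equiv.swap k₀ j₀) k₀ + 1 := by
  classical
  have inj : ∀ a b : Fin n, a ≠ b → (w a : ℕ) ≠ (w b : ℕ) := fun a b h hh =>
    h (w.injective (Fin.ext hh))
  -- there is an inversion at k₀
  obtain ⟨j₁, hj₁⟩ : ∃ j, k₀ < j ∧ w j < w k₀ := by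
    have hne : (Finset.univ.filter fun j => k₀ < j ∧ w j < w k₀).Nonempty := by
      rw [← Finset.card_pos]; exact Nat.pos_of_ne_zero hk
    obtain ⟨j, hj⟩ := hne
    exact ⟨j, (Finset.mem_filter.mp hj).2⟩
  have hwk0pos : 0 < (w k₀ : ℕ) := lt_of_le_of_lt (Nat.zero_le _) hj₁.2
  have hj0val : (w j₀ : ℕ) < (w k₀ : ℕ) := by omega
  have hj0ne : j₀ ≠ k₀ := fun h => by rw [h] at hj0val; omega
  have hzero : ∀ i j : Fin n, i < k₀ → i < j → ¬ w j < w i := by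
    intro i j hi hij hcon
    have h0 := hmin i hi
    rw [pcode, Finset.card_eq_zero] at h0
    have : j ∈ Finset.univ.filter fun j => i < j ∧ w j < w i :=
      Finset.mem_filter.mpr ⟨Finset.mem_univ _, hij, hcon⟩
    rw [h0] at this
    exact absurd this (Finset.notMem_empty j)
  have hk0j0 : k₀ < j₀ := by
    rcases lt_trichotomy k₀ j₀ with h | h | h
    · exact h
    · exact absurd h.symm hj0ne
    · exfalso
      have hne : j₁ ≠ j₀ := fun hh => by
        rw [hh] at hj₁; exact absurd (h.trans hj₁.1) (lt_irrefl _)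
      have hlt : w j₁ < w j₀ := by
        have h1 := inj j₁ j₀ hne
        have h2 : (w j₁ : ℕ) < (w k₀ : ℕ) := hj₁.2
        rw [Fin.lt_def]; omega
      exact hzero j₀ j₁ h (h.trans hj₁.1) hlt
  set v := w * Equiv.swap k₀ j₀ with hv
  have hvk : (v k₀ : ℕ) = w j₀ := by
    simp [hv, Equiv.Perm.mul_apply, Equiv.swap_apply_left]
  have hvj : (v j₀ : ℕ) = w k₀ := by
    simp [hv, Equiv.Perm.mul_apply, Equiv.swap_apply_right]
  have hvo : ∀ a : Fin n, a ≠ k₀ → a ≠ j₀ → (v a : ℕ) = w a := by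
    intro a h1 h2
    simp [hv, Equiv.Perm.mul_apply, Equiv.swap_apply_of_ne_of_ne h1 h2]
  -- the i ≠ k₀ part
  have part1 : ∀ i : Fin n, i ≠ k₀ → pcode v i = pcode w i := by
    intro i hi
    unfold pcode
    congr 1
    apply Finset.filter_congr
    intro j _
    refine and_congr_right fun hij => ?_
    rw [Fin.lt_def, Fin.lt_def]
    rcases eq_or_ne i j₀ with heq | hij0
    · -- i = j₀ : j > j₀ > k₀
      rw [heq] at hij ⊢
      have hjk : j ≠ k₀ := fun hh => by
        rw [hh] at hij; exact absurd (hk0j0.trans hij) (lt_irrefl _)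
      have hjj : j ≠ j₀ := ne_of_gt hij
      have h1 := inj j j₀ hjj
      rw [hvj, hvo j hjk hjj]
      omega
    · rcases eq_or_ne j k₀ with heq | hjk
      · -- j = k₀ : i < k₀, compare w j₀ < w i vs w k₀ < w i, both false
        rw [heq] at hij ⊢
        have hik : i < k₀ := hij
        have h1 : ¬ w k₀ < w i := hzero i k₀ hik hij
        have h2 : ¬ w j₀ < w i := hzero i j₀ hik (hik.trans hk0j0)
        rw [Fin.lt_def] at h1 h2
        rw [hvk, hvo i hi hij0]
        omega
      · rcases eq_or_ne j j₀ with heq | hjj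
        · -- j = j₀ : compare w k₀ < w i vs w j₀ < w i
          rw [heq] at hij ⊢
          have h1 := inj i k₀ hi
          rw [hvj, hvo i hi hij0]
          omega
        · rw [hvo j hjk hjj, hvo i hi hij0]
  refine ⟨part1, ?_⟩
  -- the i = k₀ part
  have hmem : j₀ ∈ Finset.univ.filter fun j => k₀ < j ∧ w j < w k₀ :=
    Finset.mem_filter.mpr ⟨Finset.mem_univ _, hk0j0, Fin.lt_def.mpr hj0val⟩
  have hset : (Finset.univ.filter fun j => k₀ < j ∧ v j < v k₀) =
      (Finset.univ.filter fun j => k₀ < j ∧ w j < w k₀).erase j₀ := by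
    ext j
    simp only [Finset.mem_erase, Finset.mem_filter, Finset.mem_univ, true_and]
    constructor
    · rintro ⟨h1, h2⟩
      have hjj : j ≠ j₀ := fun hh => by
        rw [hh] at h2
        rw [Fin.lt_def, hvj, hvk] at h2
        omega
      have hjk : j ≠ k₀ := ne_of_gt h1
      rw [Fin.lt_def, hvk, hvo j hjk hjj] at h2
      refine ⟨hjj, h1, Fin.lt_def.mpr ?_⟩
      omega
    · rintro ⟨hjj, h1, h2⟩
      have hjk : j ≠ k₀ := ne_of_gt h1
      have hne := inj j j₀ hjj
      rw [Fin.lt_def] at h2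
      refine ⟨h1, Fin.lt_def.mpr ?_⟩
      rw [hvk, hvo j hjk hjj]
      omega
  have hcard : pcode v k₀ = pcode w k₀ - 1 := by
    unfold pcode
    rw [hset, Finset.card_erase_of_mem hmem]
  have hpos : 0 < pcode w k₀ := Nat.pos_of_ne_zero hk
  exact ⟨hcard, by omega⟩
end

section
/- Let β be a weak composition of m and β′ the strong composition obtained by deleting all zero parts. The map from RSCT_n(β) to RSCT_n(β′) given by upward-justifying all rows (deleting empty rows) is a bijection that preserves the set of Springer inversions; in particular ev(P_Υ) = ev(P_{Υ′}) for corresponding tableaux. -/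
open Finset

/-- Let `β` be a weak composition of `m ≤ n` and `β'` the strong
composition obtained by deleting all zero parts (listed via the strictly monotone
enumeration `e` of the indices of nonzero parts of `β`).  Upward-justifying all rows gives
a bijection `RSCT_n(β) ≃ RSCT_n(β')` that identifies the rows via `e` and preserves the
Springer inversions; in particular the inversion vectors, hence the monomials `ev(P_Υ)`,
agree for corresponding tableaux. -/
theorem stmt15 (n m k k' : ℕ) (hmn : m ≤ n) (β : Fin k → ℕ) (hsum : ∑ j, β j = m)
    (e : Fin k' → Fin k) (he : StrictMono e) (hrange : ∀ j, β j ≠ 0 ↔ ∃ i, e i = j)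
    (β' : Fin k' → ℕ) (hβ' : ∀ i, β' i = β (e i)) :
    ∃ F : RSCT n m k β ≃ RSCT n m k' β',
      ∀ T : RSCT n m k β,
        (∀ i, T.val i = e ((F T).val i)) ∧
        (∀ (a : ℕ) (j : Fin k'), isInv T a (e j) ↔ isInv (F T) a j) ∧
        (∀ a : ℕ, invVec T a = invVec (F T) a) := by
  classical
  have einj : Function.Injective e := he.injective
  have key : ∀ (T : RSCT n m k β) (i : {a : ℕ // a ∈ content n m}),
      ∃ j', e j' = T.val i := by
    intro T i
    apply (hrange _).mp
    intro h0
    have hc := T.property (T.val i)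
    rw [h0, Finset.card_eq_zero] at hc
    have hi : i ∈ Finset.univ.filter (fun i' => T.val i' = T.val i) := by simp
    rw [hc] at hi
    exact absurd hi (Finset.notMem_empty i)
  let fv : RSCT n m k β → ({i : ℕ // i ∈ content n m} → Fin k') := fun T i =>
    (key T i).choose
  have hfv : ∀ (T : RSCT n m k β) i, e (fv T i) = T.val i := fun T i =>
    (key T i).choose_spec
  have fprop : ∀ T : RSCT n m k β, ∀ j : Fin k',
      (Finset.univ.filter fun i => fv T i = j).card = β' j := by
    intro T j
    rw [hβ', ← T.property (e j)]
    congr 1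
    apply Finset.filter_congr
    intro i _
    constructor
    · intro h
      rw [← hfv T i, h]
    · intro h
      apply einj
      rw [hfv T i, h]
  let f : RSCT n m k β → RSCT n m k' β' := fun T => ⟨fv T, fprop T⟩
  let g : RSCT n m k' β' → RSCT n m k β := fun T' =>
    ⟨fun i => e (T'.val i), by
      intro j
      by_cases hj : ∃ j', e j' = j
      · obtain ⟨j', rfl⟩ := hj
        rw [← hβ', ← T'.property j']
        congr 1
        apply Finset.filter_congr
        intro i _
        exact ⟨fun h => einj h, fun h => congrArg e h⟩
      · have h0 : β j = 0 := by
          by_contra h0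
          exact hj ((hrange j).mp h0)
        rw [h0, Finset.card_eq_zero, Finset.filter_eq_empty_iff]
        intro i _ h
        exact hj ⟨_, h⟩⟩
  have hgf : ∀ T, g (f T) = T := by
    intro T
    apply Subtype.ext
    funext i
    exact hfv T i
  have hfg : ∀ T', f (g T') = T' := by
    intro T'
    apply Subtype.ext
    funext i
    apply einj
    exact hfv (g T') i
  refine ⟨⟨f, g, hgf, hfg⟩, ?_⟩
  intro T
  have hcol : ∀ i, colOf (f T) i = colOf T i := by
    intro i
    unfold colOf
    congr 1
    apply Finset.filter_congr
    intro i' _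
    constructor
    · rintro ⟨h1, h2⟩
      refine ⟨?_, h2⟩
      rw [← hfv T i', ← hfv T i]
      exact congrArg e h1
    · rintro ⟨h1, h2⟩
      refine ⟨?_, h2⟩
      apply einj
      rw [hfv T i', hfv T i, h1]
  have hinv : ∀ (a : ℕ) (j : Fin k'), isInv T a (e j) ↔ isInv (f T) a j := by
    intro a j
    constructor
    · rintro ⟨hi, i', h1, h2, h3⟩
      refine ⟨hi, i', ?_, h2, ?_⟩
      · apply einj; rw [hfv T i', h1]
      · rcases h3 with h3 | ⟨h3, h4⟩
        · left; rwa [hcol, hcol]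
        · right
          refine ⟨by rwa [hcol, hcol], ?_⟩
          have : e j < e ((f T).val ⟨a, hi⟩) := by rwa [hfv T ⟨a, hi⟩]
          exact he.lt_iff_lt.mp this
    · rintro ⟨hi, i', h1, h2, h3⟩
      refine ⟨hi, i', ?_, h2, ?_⟩
      · exact (hfv T i').symm.trans (congrArg e h1)
      · rcases h3 with h3 | ⟨h3, h4⟩
        · left; rwa [hcol, hcol] at h3
        · right
          refine ⟨by rwa [hcol, hcol] at h3, ?_⟩
          rw [← hfv T ⟨a, hi⟩]
          exact he h4
  refine ⟨fun i => (hfv T i).symm, hinv, ?_⟩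
  intro a
  unfold invVec InvF
  symm
  apply Finset.card_bij (fun p _ => (p.1, e p.2))
  · rintro ⟨b, j⟩ hp
    simp only [Finset.mem_filter, Finset.mem_product] at hp ⊢
    obtain ⟨⟨⟨hb, -⟩, hi⟩, ha⟩ := hp
    exact ⟨⟨⟨hb, Finset.mem_univ _⟩, (hinv b j).mpr hi⟩, ha⟩
  · rintro ⟨b1, j1⟩ h1 ⟨b2, j2⟩ h2 hq
    simp only [Prod.mk.injEq] at hq ⊢
    exact ⟨hq.1, einj hq.2⟩
  · rintro ⟨b, j⟩ hq
    simp only [Finset.mem_filter, Finset.mem_product] at hq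
    obtain ⟨⟨⟨hb, -⟩, hi⟩, ha⟩ := hq
    obtain ⟨hbc, i', h1, h2, h3⟩ := hi
    have hj : j = e (fv T i') := by rw [hfv T i', h1]
    refine ⟨(b, fv T i'), ?_, ?_⟩
    · simp only [Finset.mem_filter, Finset.mem_product]
      refine ⟨⟨⟨hb, Finset.mem_univ _⟩, ?_⟩, ha⟩
      apply (hinv b (fv T i')).mp
      rw [← hj]
      exact ⟨hbc, i', h1, h2, h3⟩
    · exact Prod.ext rfl hj.symm
end
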